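/- Let a, b, c, d ∈ ℂ with ad − bc ≠ 0 and let φ(z) = (az+b)/(cz+d) be a selfmap of 𝔻. Suppose φ fixes a point ζ with |ζ| = 1 (cζ + d ≠ 0 and φ(ζ) = ζ) and that the derivative φ'(ζ) = (ad − bc)/(cζ + d)² equals a real number s with 0 < s < 1. Then the linear-fractional map σ∘φ⁻¹, given explicitly by Ψ(z) = ((conj(a)·d + conj(c)·c)·z − (conj(a)·b + conj(c)·a)) / ((−conj(b)·d − conj(d)·c)·z + (conj(b)·b + conj(d)·a)), maps 𝔻 into 𝔻: for every z ∈ 𝔻 its denominator is nonzero and |Ψ(z)| < 1. -/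

import Mathlib

open ComplexConjugate

/-!
Put `t = cζ + d`. The fixed-point and derivative conditions force `a = cζ + st` and
`b = (1 - s)ζt - cζ²`. Write `Ψ(z) = (αz - β)/(γz + δ)`. For any coefficients,
`(|δ|² - |γ|²)(αz - β) = (-βδ̄ - αγ̄)(γz + δ) + (αδ + βγ)(δ̄z + γ̄)`, and here
`αδ + βγ = |ad - bc|² > 0`. For hyperbolic `φ` one also has `-βδ̄ - αγ̄ = μζ` and
`|δ|² - |γ|² = μ + |ad - bc|²`, where `μ = s(1 - s)|t|²(|d - cζ|² - |b - aζ|²)/4`.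
Here `μ ≥ 0` because `φ` maps `-ζ` into the closed disk. So `Ψ` is a convex combination
of the unimodular constant `ζ` and the disk automorphism `z ↦ (δ̄z + γ̄)/(γz + δ)`.
-/

theorem norm_le_norm_of_norm_lt_on_ball {E F G : Type*} [NormedAddCommGroup E]
    [NormedSpace ℝ E] [SeminormedAddGroup F] [SeminormedAddGroup G] {f : E → F} {g : E → G}
    (hf : Continuous f) (hg : Continuous g) (h : ∀ z, ‖z‖ < 1 → ‖f z‖ < ‖g z‖)
    {z : E} (hz : ‖z‖ ≤ 1) : ‖f z‖ ≤ ‖g z‖ := by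
  have hz' : z ∈ closure (Metric.ball (0 : E) 1) := by
    rw [closure_ball _ one_ne_zero]
    simpa using hz
  refine closure_lt_subset_le hf.norm hg.norm (closure_mono (fun w hw => ?_) hz')
  exact h w (by simpa using hw)

section LinearFractional

open Complex

theorem norm_mul_add_le_of_mapsTo_disk {a b c d w : ℂ}
    (hself : ∀ z : ℂ, ‖z‖ < 1 → c * z + d ≠ 0 ∧ ‖(a * z + b) / (c * z + d)‖ < 1)
    (hw : ‖w‖ ≤ 1) : ‖a * w + b‖ ≤ ‖c * w + d‖ := by
  refine norm_le_norm_of_norm_lt_on_ball (f := fun z => a * z + b) (g := fun z => c * z + d)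
    (by fun_prop) (by fun_prop) (fun z hz => ?_) hw
  obtain ⟨hden, hlt⟩ := hself z hz
  rwa [norm_div, div_lt_one (norm_pos_iff.2 hden)] at hlt

theorem norm_conj_mul_add_lt {γ δ z : ℂ} (hγδ : ‖γ‖ < ‖δ‖) (hz : ‖z‖ < 1) :
    ‖conj δ * z + conj γ‖ < ‖γ * z + δ‖ := by
  have hid : normSq (γ * z + δ) - normSq (conj δ * z + conj γ) =
      (normSq δ - normSq γ) * (1 - normSq z) := by
    apply ofReal_injective
    push_cast
    simp only [normSq_eq_conj_mul_self, map_add, map_mul, conj_conj]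
    ring
  rw [← sq_lt_sq₀ (norm_nonneg _) (norm_nonneg _), Complex.sq_norm, Complex.sq_norm]
  rw [← sq_lt_sq₀ (norm_nonneg _) (norm_nonneg _), Complex.sq_norm, Complex.sq_norm] at hγδ
  have hz' : normSq z < 1 := by
    rw [← Complex.sq_norm]
    nlinarith [norm_nonneg z]
  nlinarith

theorem norm_lt_of_mul_eq_convex_comb {w p q ζ : ℂ} {μ ν : ℝ} (hμ : 0 ≤ μ) (hν : 0 < ν)
    (hζ : ‖ζ‖ ≤ 1) (hpq : ‖p‖ < ‖q‖) (h : ((μ + ν : ℝ) : ℂ) * w = μ * ζ * q + ν * p) :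
    ‖w‖ < ‖q‖ := by
  have hlt : (μ + ν) * ‖w‖ < (μ + ν) * ‖q‖ :=
    calc (μ + ν) * ‖w‖ = ‖((μ + ν : ℝ) : ℂ) * w‖ := by
          rw [norm_mul, norm_real, Real.norm_of_nonneg (by linarith)]
      _ ≤ μ * ‖ζ‖ * ‖q‖ + ν * ‖p‖ := by
          rw [h]
          refine (norm_add_le _ _).trans_eq ?_
          rw [norm_mul, norm_mul, norm_mul, norm_real, norm_real, Real.norm_of_nonneg hμ,
            Real.norm_of_nonneg hν.le]
      _ < μ * 1 * ‖q‖ + ν * ‖q‖ := add_lt_add_of_le_of_lt (by gcongr) (by gcongr)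
      _ = (μ + ν) * ‖q‖ := by ring
  exact lt_of_mul_lt_mul_left hlt (by linarith)

theorem mapsTo_disk_of_convex_decomposition {α β γ δ ζ z : ℂ} {μ ν : ℝ} (hμ : 0 ≤ μ)
    (hν : 0 < ν) (hζ : ‖ζ‖ ≤ 1) (hcross : -β * conj δ - α * conj γ = μ * ζ)
    (hdet : α * δ + β * γ = ν) (hgap : normSq δ - normSq γ = μ + ν) (hz : ‖z‖ < 1) :
    γ * z + δ ≠ 0 ∧ ‖(α * z - β) / (γ * z + δ)‖ < 1 := by
  have hauto : ‖conj δ * z + conj γ‖ < ‖γ * z + δ‖ := by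
    refine norm_conj_mul_add_lt ?_ hz
    rw [← sq_lt_sq₀ (norm_nonneg _) (norm_nonneg _), Complex.sq_norm, Complex.sq_norm]
    linarith
  have hden : γ * z + δ ≠ 0 := norm_pos_iff.1 ((norm_nonneg _).trans_lt hauto)
  have hcomb : ((μ + ν : ℝ) : ℂ) * (α * z - β) =
      μ * ζ * (γ * z + δ) + ν * (conj δ * z + conj γ) := by
    rw [← hcross, ← hdet, ← hgap]
    push_cast
    simp only [normSq_eq_conj_mul_self]
    ring
  refine ⟨hden, ?_⟩
  rw [norm_div, div_lt_one (norm_pos_iff.2 hden)]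
  exact norm_lt_of_mul_eq_convex_comb hμ hν hζ hauto hcomb

theorem det_coeff_eq (a b c d : ℂ) :
    (conj a * d + conj c * c) * (conj b * b + conj d * a)
        + (conj a * b + conj c * a) * (-conj b * d - conj d * c) =
      normSq (a * d - b * c) := by
  rw [normSq_eq_conj_mul_self, map_sub, map_mul, map_mul]
  ring

theorem hyperbolic_normal_form {a b c d ζ : ℂ} {s : ℝ} (hden : c * ζ + d ≠ 0)
    (hfix : (a * ζ + b) / (c * ζ + d) = ζ)
    (hderiv : (a * d - b * c) / (c * ζ + d) ^ 2 = s) :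
    a = c * ζ + s * (c * ζ + d) ∧ b = (1 - s) * ζ * (c * ζ + d) - c * ζ ^ 2 := by
  rw [div_eq_iff hden] at hfix
  rw [div_eq_iff (pow_ne_zero 2 hden)] at hderiv
  have hmul : (c * ζ + d) * (a - c * ζ) = (c * ζ + d) * (s * (c * ζ + d)) := by
    linear_combination hderiv + c * hfix
  have ha := mul_left_cancel₀ hden hmul
  exact ⟨by linear_combination ha, by linear_combination hfix - ζ * ha⟩

theorem cross_coeff_eq_of_hyperbolic {a b c d ζ : ℂ} {s : ℝ} (hζ : ‖ζ‖ = 1)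
    (ha : a = c * ζ + s * (c * ζ + d)) (hb : b = (1 - s) * ζ * (c * ζ + d) - c * ζ ^ 2) :
    -(conj a * b + conj c * a) * conj (conj b * b + conj d * a)
        - (conj a * d + conj c * c) * conj (-conj b * d - conj d * c) =
      ((s * (1 - s) * normSq (c * ζ + d) * (normSq (d - c * ζ) - normSq (b - a * ζ)) / 4 : ℝ)
        : ℂ) * ζ := by
  have hζ0 : ζ ≠ 0 := norm_ne_zero_iff.1 (hζ ▸ one_ne_zero)
  -- On the unit circle `conj ζ = ζ⁻¹`, which turns the identity into one of rational functions.
  push_cast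
  simp only [normSq_eq_conj_mul_self]
  subst ha hb
  simp only [map_add, map_mul, map_sub, map_neg, map_pow, map_one, conj_conj, conj_ofReal,
    map_inv₀, ← inv_eq_conj hζ, inv_inv]
  field_simp
  ring

theorem normSq_sub_normSq_coeff_eq_of_hyperbolic {a b c d ζ : ℂ} {s : ℝ} (hζ : ‖ζ‖ = 1)
    (ha : a = c * ζ + s * (c * ζ + d)) (hb : b = (1 - s) * ζ * (c * ζ + d) - c * ζ ^ 2) :
    normSq (conj b * b + conj d * a) - normSq (-conj b * d - conj d * c) =
      s * (1 - s) * normSq (c * ζ + d) * (normSq (d - c * ζ) - normSq (b - a * ζ)) / 4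
        + normSq (a * d - b * c) := by
  have hζ0 : ζ ≠ 0 := norm_ne_zero_iff.1 (hζ ▸ one_ne_zero)
  apply ofReal_injective
  push_cast
  simp only [normSq_eq_conj_mul_self]
  subst ha hb
  simp only [map_add, map_mul, map_sub, map_neg, map_pow, map_one, conj_conj, conj_ofReal,
    map_inv₀, ← inv_eq_conj hζ, inv_inv]
  field_simp
  ring

end LinearFractional

/-- If `φ(z) = (az+b)/(cz+d)` is a linear-fractional selfmap of the unit disk of
hyperbolic type (fixed point `ζ` on the unit circle with `φ'(ζ) = s ∈ (0,1)`), then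
the linear-fractional map `σ ∘ φ⁻¹` (with the displayed coefficients) maps the unit
disk into itself (Sadraoui: `C_φ` is coposinormal). -/
theorem sigma_comp_phi_inv_selfmap_of_hyperbolic (a b c d ζ : ℂ) (s : ℝ)
    (hdet : a * d - b * c ≠ 0)
    (hself : ∀ z : ℂ, ‖z‖ < 1 →
      c * z + d ≠ 0 ∧ ‖(a * z + b) / (c * z + d)‖ < 1)
    (hζ : ‖ζ‖ = 1) (hζden : c * ζ + d ≠ 0)
    (hfix : (a * ζ + b) / (c * ζ + d) = ζ)
    (hs0 : 0 < s) (hs1 : s < 1)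
    (hderiv : (a * d - b * c) / (c * ζ + d) ^ 2 = (s : ℂ)) :
    ∀ z : ℂ, ‖z‖ < 1 →
      (-conj b * d - conj d * c) * z + (conj b * b + conj d * a) ≠ 0 ∧
      ‖((conj a * d + conj c * c) * z - (conj a * b + conj c * a)) /
        ((-conj b * d - conj d * c) * z + (conj b * b + conj d * a))‖ < 1 := by
  obtain ⟨ha, hb⟩ := hyperbolic_normal_form hζden hfix hderiv
  have hanti : ‖b - a * ζ‖ ≤ ‖d - c * ζ‖ := by
    have := norm_mul_add_le_of_mapsTo_disk hself (w := -ζ) (by rw [norm_neg, hζ])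
    rwa [mul_neg, neg_add_eq_sub, mul_neg, neg_add_eq_sub] at this
  have hgap : 0 ≤ Complex.normSq (d - c * ζ) - Complex.normSq (b - a * ζ) := by
    rw [← Complex.sq_norm, ← Complex.sq_norm, sub_nonneg]
    gcongr
  have hs : 0 ≤ s * (1 - s) := mul_nonneg hs0.le (sub_nonneg.2 hs1.le)
  have hμ : 0 ≤ s * (1 - s) * Complex.normSq (c * ζ + d) *
      (Complex.normSq (d - c * ζ) - Complex.normSq (b - a * ζ)) / 4 := by
    have := Complex.normSq_nonneg (c * ζ + d)
    positivity
  intro z hz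
  exact mapsTo_disk_of_convex_decomposition hμ (Complex.normSq_pos.2 hdet) hζ.le
    (cross_coeff_eq_of_hyperbolic hζ ha hb) (det_coeff_eq a b c d)
    (normSq_sub_normSq_coeff_eq_of_hyperbolic hζ ha hb) hz
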